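/- For all positive integers s and n, the unimodality inequality C_s(n, k) ≤ C_s(n, k+1) holds for all 0 ≤ k < ⌈sn/2⌉; in particular the central coefficient C_s(2n, sn) is the maximum of the coefficients C_s(2n, k). -/
import Mathlib


open Polynomial Finset

/-- The s-binomial coefficient: coefficient of x^k in (1 + x + ... + x^s)^n. -/
noncomputable def sBinom (s n k : ℕ) : ℕ :=
  (((∑ i ∈ Finset.range (s + 1), (Polynomial.X : Polynomial ℕ) ^ i)) ^ n).coeff k

private lemma sBinom_succ (s n k : ℕ) :
    sBinom s (n + 1) k =
      ∑ i ∈ Finset.range (s + 1), if i ≤ k then sBinom s n (k - i) else 0 := by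
  unfold sBinom
  rw [pow_succ, Finset.mul_sum, Polynomial.finset_sum_coeff]
  exact Finset.sum_congr rfl fun i _ => Polynomial.coeff_mul_X_pow' _ _ _

/-- Symmetric about `d/2` with support in `[0, d]`. -/
private def SymS (d : ℕ) (c : ℕ → ℕ) : Prop :=
  (∀ k ≤ d, c (d - k) = c k) ∧ ∀ k, d < k → c k = 0

/-- Monotone on the first half. -/
private def StepS (d : ℕ) (c : ℕ → ℕ) : Prop :=
  ∀ k, 2 * k + 1 ≤ d → c k ≤ c (k + 1)

private lemma chain {d : ℕ} {c : ℕ → ℕ} (hm : StepS d c) :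
    ∀ v u, u ≤ v → 2 * v ≤ d → c u ≤ c v := by
  intro v
  induction v with
  | zero =>
    intro u hu _
    have : u = 0 := by omega
    subst this; exact le_rfl
  | succ v ih =>
    intro u hu hv
    rcases Nat.lt_or_ge u (v + 1) with h | h
    · exact le_trans (ih u (by omega) (by omega)) (hm v (by omega))
    · have : u = v + 1 := by omega
      subst this; exact le_rfl

private lemma pair {d : ℕ} {c : ℕ → ℕ} (hsym : SymS d c) (hm : StepS d c) :
    ∀ u v, u ≤ v → u + v ≤ d → c u ≤ c v := by
  intro u v huv hd
  rcases le_or_gt (2 * v) d with h | h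
  · exact chain hm v u huv h
  · have hv : v ≤ d := by omega
    calc c u ≤ c (d - v) := chain hm (d - v) u (by omega) (by omega)
      _ = c v := hsym.1 v hv

private lemma main (s n : ℕ) : SymS (s * n) (sBinom s n) ∧ StepS (s * n) (sBinom s n) := by
  induction n with
  | zero =>
    refine ⟨⟨?_, ?_⟩, ?_⟩
    · intro k hk
      have : k = 0 := by omega
      subst this; rfl
    · intro k hk
      have hk0 : k ≠ 0 := by omega
      simp [sBinom, Polynomial.coeff_one, hk0]
    · intro k hk; omega
  | succ n ih =>
    obtain ⟨⟨hsym, hvan⟩, hmono⟩ := ih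
    set d := s * n with hd
    have hd' : s * (n + 1) = d + s := by ring
    rw [hd']
    have hvan' : ∀ k, d + s < k →
        (∑ i ∈ Finset.range (s + 1), if i ≤ k then sBinom s n (k - i) else 0) = 0 := by
      intro k hk
      refine Finset.sum_eq_zero fun i hi => ?_
      rw [Finset.mem_range] at hi
      by_cases h : i ≤ k
      · rw [if_pos h, hvan (k - i) (by omega)]
      · rw [if_neg h]
    refine ⟨⟨?_, ?_⟩, ?_⟩
    · -- symmetry
      intro k hk
      rw [sBinom_succ, sBinom_succ, ← Finset.sum_range_reflect]
      refine Finset.sum_congr rfl fun i hi => ?_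
      rw [Finset.mem_range] at hi
      have his : i ≤ s := by omega
      have hred : s + 1 - 1 - i = s - i := by omega
      rw [hred]
      by_cases h1 : i ≤ k
      · by_cases h2 : k - i ≤ d
        · have e : s - i ≤ d + s - k := by omega
          rw [if_pos e, if_pos h1]
          have e2 : d + s - k - (s - i) = d - (k - i) := by omega
          rw [e2]
          exact hsym (k - i) h2
        · have e : ¬(s - i ≤ d + s - k) := by omega
          rw [if_neg e, if_pos h1, hvan (k - i) (by omega)]
      · have e : s - i ≤ d + s - k := by omega
        rw [if_pos e, if_neg h1, hvan _ (by omega)]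
    · -- vanishing
      intro k hk
      rw [sBinom_succ]
      exact hvan' k hk
    · -- step monotonicity
      intro k hk
      rw [sBinom_succ, sBinom_succ, Finset.sum_range_succ,
        Finset.sum_range_succ' (fun i => if i ≤ k + 1 then sBinom s n (k + 1 - i) else 0) s]
      simp only [Nat.add_sub_add_right, Nat.zero_le, if_pos, Nat.add_le_add_iff_right,
        Nat.sub_zero]
      have hle : (if s ≤ k then sBinom s n (k - s) else 0) ≤ sBinom s n (k + 1) := by
        by_cases h : s ≤ k
        · rw [if_pos h]
          exact pair ⟨hsym, hvan⟩ hmono (k - s) (k + 1) (by omega) (by omega)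
        · rw [if_neg h]; exact Nat.zero_le _
      exact Nat.add_le_add_left hle _

theorem stmt10 (n s : ℕ) (hn : 0 < n) (hs : 0 < s) :
    (∀ k, k < (s * n + 1) / 2 → sBinom s n k ≤ sBinom s n (k + 1)) ∧
      (∀ k, sBinom s (2 * n) k ≤ sBinom s (2 * n) (s * n)) := by
  constructor
  · intro k hk
    exact (main s n).2 k (by omega)
  · intro k
    obtain ⟨⟨hsym, hvan⟩, hmono⟩ := main s (2 * n)
    have hd : s * (2 * n) = 2 * (s * n) := by ring
    rcases le_or_gt k (s * n) with h | h
    · exact pair ⟨hsym, hvan⟩ hmono k (s * n) h (by omega)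
    · rcases le_or_gt k (s * (2 * n)) with h2 | h2
      · have := hsym k h2
        rw [← this]
        exact pair ⟨hsym, hvan⟩ hmono _ (s * n) (by omega) (by omega)
      · rw [hvan k h2]; exact Nat.zero_le _
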